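/- For every n ≥ 7, if every pair in R_{n-3} ⊗ L_{n-2} is a smallest string attractor of the Fibonacci word F_n, then every pair in L_{n-3} ⊗ L_{n-2} is a smallest string attractor of F_n. -/

import Mathlib

/-- Fibonacci numbers: f 0 = f 1 = 1, f (n+2) = f (n+1) + f n. -/
def fib : ℕ → ℕ
  | 0 => 1
  | 1 => 1
  | n + 2 => fib (n + 1) + fib n

/-- Fibonacci words over {a, b}; `false` encodes `a`, `true` encodes `b`. -/
def F : ℕ → List Bool
  | 0 => [true]
  | 1 => [false]
  | n + 2 => F (n + 1) ++ F n

/-- Singular words: S 0 = a, S 1 = b, S 2 = S 0 · S₋₁ · S 0 = aa,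
and S n = S (n-2) · S (n-3) · S (n-2) for n ≥ 3. -/
def S : ℕ → List Bool
  | 0 => [false]
  | 1 => [true]
  | 2 => [false, false]
  | n + 3 => S (n + 1) ++ S n ++ S (n + 1)

/-- `w` occurs in `T` at (1-based) position `i`, i.e. `w = T[i .. i + |w| - 1]`. -/
def OccursAt {α : Type*} (T w : List α) (i : ℕ) : Prop :=
  1 ≤ i ∧ i + w.length ≤ T.length + 1 ∧ (T.drop (i - 1)).take w.length = w

/-- `Γ` is a string attractor of `T`: a set of (1-based) positions of `T` such that
every nonempty substring of `T` has an occurrence crossing a position of `Γ`. -/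
def IsAttractor {α : Type*} (T : List α) (Γ : Finset ℕ) : Prop :=
  (∀ k ∈ Γ, 1 ≤ k ∧ k ≤ T.length) ∧
  ∀ w : List α, w ≠ [] → w <:+: T →
    ∃ i, OccursAt T w i ∧ ∃ k ∈ Γ, i ≤ k ∧ k < i + w.length

/-- `Γ` is a smallest string attractor of `T`. -/
def IsSmallestAttractor {α : Type*} (T : List α) (Γ : Finset ℕ) : Prop :=
  IsAttractor T Γ ∧ ∀ Γ' : Finset ℕ, IsAttractor T Γ' → Γ.card ≤ Γ'.card

/-- The set of all smallest string attractors of `T`. -/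
def Att {α : Type*} (T : List α) : Set (Finset ℕ) := {Γ | IsSmallestAttractor T Γ}

/-- The position sets L_k: L_2 = {3}, L_3 = {5},
L_k = (L_{k-2} ∪ R_{k-2}) ⊕ f_k for k ≥ 4 (with R_{k-2} = L_{k-2} ⊕ f_{k-3}). -/
def Lset : ℕ → Finset ℕ
  | 0 => ∅
  | 1 => ∅
  | 2 => {3}
  | 3 => {5}
  | k + 4 => ((Lset (k + 2)) ∪ (Lset (k + 2)).image (· + fib (k + 1))).image (· + fib (k + 4))

/-- The position sets R_k = L_k ⊕ f_{k-1} (so R_2 = {4}, R_3 = {7}). -/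
def Rset (k : ℕ) : Finset ℕ := (Lset k).image (· + fib (k - 1))

/-- X ⊗ Y := { {x, y} : x ∈ X, y ∈ Y }. -/
def pairSet (X Y : Finset ℕ) : Set (Finset ℕ) := {Γ | ∃ x ∈ X, ∃ y ∈ Y, Γ = {x, y}}

lemma length_F : ∀ n, (F n).length = fib n
  | 0 => rfl
  | 1 => rfl
  | n + 2 => by
    rw [show F (n+2) = F (n+1) ++ F n from rfl, List.length_append,
      length_F (n+1), length_F n, show fib (n+2) = fib (n+1) + fib n from rfl]

lemma fib_pos : ∀ n, 1 ≤ fib n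
  | 0 => le_refl 1
  | 1 => le_refl 1
  | n + 2 => by
    have := fib_pos (n+1); have := fib_pos n
    rw [show fib (n+2) = fib (n+1) + fib n from rfl]; omega

lemma Lset_lb : ∀ k, ∀ x ∈ Lset k, fib (k+1) ≤ x
  | 0, x, hx => by simp [Lset] at hx
  | 1, x, hx => by simp [Lset] at hx
  | 2, x, hx => by simp [Lset] at hx; subst hx; decide
  | 3, x, hx => by simp [Lset] at hx; subst hx; decide
  | k + 4, x, hx => by
    simp only [Lset, Finset.mem_image, Finset.mem_union] at hx
    show fib (k+5) ≤ x
    obtain ⟨z, hz | ⟨w, hw, rfl⟩, rfl⟩ := hx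
    · have hIH : fib (k+3) ≤ z := Lset_lb (k+2) z hz
      have h1 : fib (k+5) = fib (k+4) + fib (k+3) := rfl
      omega
    · have hIH : fib (k+3) ≤ w := Lset_lb (k+2) w hw
      have h1 : fib (k+5) = fib (k+4) + fib (k+3) := rfl
      omega

lemma Lset_ub : ∀ k, ∀ x ∈ Lset (k+2), x ≤ fib (k+3) + fib k - 1
  | 0, x, hx => by simp [Lset] at hx; subst hx; decide
  | 1, x, hx => by simp [Lset] at hx; subst hx; decide
  | k + 2, x, hx => by
    show x ≤ fib (k+5) + fib (k+2) - 1
    simp only [show k+2+2 = k+4 from rfl, Lset, Finset.mem_image, Finset.mem_union] at hx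
    have h1 : fib (k+5) = fib (k+4) + fib (k+3) := rfl
    have h2 : fib (k+4) = fib (k+3) + fib (k+2) := rfl
    have h3 : fib (k+3) = fib (k+2) + fib (k+1) := rfl
    have h4 : fib (k+2) = fib (k+1) + fib k := rfl
    have hp := fib_pos k
    obtain ⟨z, hz | ⟨w, hw, rfl⟩, rfl⟩ := hx
    · have := Lset_ub k z hz; omega
    · have := Lset_ub k w hw; omega

/-- Classic near-commutation: F(k+1)F(k) and F(k)F(k+1) agree on the first fib(k+2)-2 letters. -/
lemma key : ∀ k, (F (k+1) ++ F k).take (fib (k+2) - 2) = (F k ++ F (k+1)).take (fib (k+2) - 2) := by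
  intro k
  induction k with
  | zero => rfl
  | succ k ih =>
    have h2 : fib (k+2) = fib (k+1) + fib k := rfl
    have h3 : fib (k+3) = fib (k+2) + fib (k+1) := rfl
    have hp1 := fib_pos k; have hp2 := fib_pos (k+1)
    have hlen : fib (k+3) - 2 = (F (k+1)).length + (fib (k+2) - 2) := by
      rw [length_F]; omega
    have e1 : F (k+2) ++ F (k+1) = F (k+1) ++ (F k ++ F (k+1)) := by
      rw [show F (k+2) = F (k+1) ++ F k from rfl, List.append_assoc]
    have e2 : F (k+1) ++ F (k+2) = F (k+1) ++ (F (k+1) ++ F k) := by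
      rw [show F (k+2) = F (k+1) ++ F k from rfl]
    rw [e1, e2, hlen, List.take_length_add_append, List.take_length_add_append, ih]

/-- Structural decomposition of F (m+7). -/
lemma Fdecomp (m : ℕ) :
    F (m+7) = F (m+4) ++ (F (m+3) ++ (F (m+3) ++ (F (m+2) ++ F (m+5)))) := by
  have h7 : F (m+7) = F (m+6) ++ F (m+5) := rfl
  have h6 : F (m+6) = F (m+5) ++ F (m+4) := rfl
  have h5 : F (m+5) = F (m+4) ++ F (m+3) := rfl
  have h4 : F (m+4) = F (m+3) ++ F (m+2) := rfl
  calc F (m+7) = F (m+6) ++ F (m+5) := rfl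
    _ = (F (m+5) ++ F (m+4)) ++ F (m+5) := by rw [← h6]
    _ = ((F (m+4) ++ F (m+3)) ++ F (m+4)) ++ F (m+5) := by rw [← h5]
    _ = ((F (m+4) ++ F (m+3)) ++ (F (m+3) ++ F (m+2))) ++ F (m+5) := by rw [← h4]
    _ = F (m+4) ++ (F (m+3) ++ (F (m+3) ++ (F (m+2) ++ F (m+5)))) := by
        simp [List.append_assoc]

/-- The core periodicity identity E. -/
lemma periodE (m : ℕ) :
    ((F (m+7)).drop (fib (m+4))).take (fib (m+5) - 2)
      = ((F (m+7)).drop (fib (m+4) + fib (m+3))).take (fib (m+5) - 2) := by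
  have h5 : fib (m+5) = fib (m+4) + fib (m+3) := rfl
  have h4 : fib (m+4) = fib (m+3) + fib (m+2) := rfl
  have hp2 := fib_pos (m+2); have hp3 := fib_pos (m+3)
  have hd1 : (F (m+7)).drop (fib (m+4))
      = F (m+3) ++ (F (m+3) ++ (F (m+2) ++ F (m+5))) := by
    rw [Fdecomp m, ← length_F (m+4), List.drop_left]
  have hd2 : (F (m+7)).drop (fib (m+4) + fib (m+3))
      = F (m+3) ++ (F (m+2) ++ F (m+5)) := by
    rw [Fdecomp m, show F (m+4) ++ (F (m+3) ++ (F (m+3) ++ (F (m+2) ++ F (m+5))))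
        = (F (m+4) ++ F (m+3)) ++ (F (m+3) ++ (F (m+2) ++ F (m+5))) by
          simp [List.append_assoc],
      show fib (m+4) + fib (m+3) = (F (m+4) ++ F (m+3)).length by
        rw [List.length_append, length_F, length_F], List.drop_left]
  rw [hd1, hd2]
  have hlen : fib (m+5) - 2 = (F (m+3)).length + (fib (m+4) - 2) := by
    rw [length_F]; omega
  rw [hlen, List.take_length_add_append, List.take_length_add_append]
  congr 1
  -- reduce to first fib(m+4)-2 chars of F(m+3)++(F(m+2)++F(m+5)) vs F(m+2)++F(m+5)
  have h5' : F (m+5) = F (m+3) ++ (F (m+2) ++ F (m+3)) := by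
    calc F (m+5) = F (m+4) ++ F (m+3) := rfl
      _ = (F (m+3) ++ F (m+2)) ++ F (m+3) := by rw [show F (m+4) = F (m+3) ++ F (m+2) from rfl]
      _ = F (m+3) ++ (F (m+2) ++ F (m+3)) := by simp [List.append_assoc]
  have hL : (F (m+3) ++ (F (m+2) ++ F (m+5))).take (fib (m+4) - 2)
      = (F (m+3) ++ F (m+2)).take (fib (m+4) - 2) := by
    rw [show F (m+3) ++ (F (m+2) ++ F (m+5)) = (F (m+3) ++ F (m+2)) ++ F (m+5) by
      simp [List.append_assoc]]
    exact List.take_append_of_le_length (by rw [List.length_append, length_F, length_F]; omega)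
  have hR : (F (m+2) ++ F (m+5)).take (fib (m+4) - 2)
      = (F (m+2) ++ F (m+3)).take (fib (m+4) - 2) := by
    rw [h5', show F (m+2) ++ (F (m+3) ++ (F (m+2) ++ F (m+3)))
        = (F (m+2) ++ F (m+3)) ++ (F (m+2) ++ F (m+3)) by simp [List.append_assoc]]
    exact List.take_append_of_le_length (by rw [List.length_append, length_F, length_F]; omega)
  rw [hL, hR, key (m+2)]

/-- Usable form of periodicity: segments shifted by fib(m+3) coincide inside the run. -/
lemma per (m d ℓ : ℕ) (hlb : fib (m+4) ≤ d) (hub : d + ℓ ≤ fib (m+6) - 2) :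
    ((F (m+7)).drop d).take ℓ = ((F (m+7)).drop (d + fib (m+3))).take ℓ := by
  have h6 : fib (m+6) = fib (m+5) + fib (m+4) := rfl
  have h5 : fib (m+5) = fib (m+4) + fib (m+3) := rfl
  set c := d - fib (m+4) with hc
  have hd : d = fib (m+4) + c := by omega
  have hcl : c + ℓ ≤ fib (m+5) - 2 := by omega
  have step : ∀ a : ℕ, ((((F (m+7)).drop a).take (fib (m+5) - 2)).drop c).take ℓ
      = ((F (m+7)).drop (a + c)).take ℓ := by
    intro a
    rw [List.drop_take, List.take_take, List.drop_drop]
    rw [min_eq_left (show ℓ ≤ fib (m+5) - 2 - c by omega)]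
  calc ((F (m+7)).drop d).take ℓ
      = ((F (m+7)).drop (fib (m+4) + c)).take ℓ := by rw [← hd]
    _ = ((((F (m+7)).drop (fib (m+4))).take (fib (m+5) - 2)).drop c).take ℓ := (step _).symm
    _ = ((((F (m+7)).drop (fib (m+4) + fib (m+3))).take (fib (m+5) - 2)).drop c).take ℓ := by
        rw [periodE m]
    _ = ((F (m+7)).drop (fib (m+4) + fib (m+3) + c)).take ℓ := step _
    _ = ((F (m+7)).drop (d + fib (m+3))).take ℓ := by
        rw [show fib (m+4) + fib (m+3) + c = d + fib (m+3) by omega]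

/-- From an occurrence, read off letters of T. -/
lemma occ_getElem {α : Type*} {T w : List α} {i : ℕ} (h : OccursAt T w i) (o : ℕ)
    (ho : o < w.length) : T[i - 1 + o]? = w[o]? := by
  obtain ⟨h1, h2, h3⟩ := h
  rw [← h3, ← List.getElem?_drop]
  rw [List.getElem?_take]
  simp [ho]

lemma true_infix : ∀ m, [true] <:+: F (m+2) := by
  intro m
  induction m with
  | zero => decide
  | succ m ih =>
    exact ih.trans (List.prefix_append (F (m+2)) (F (m+1))).isInfix

lemma aa_infix : ∀ m, [false, false] <:+: F (m+4) := by
  intro m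
  induction m with
  | zero => decide
  | succ m ih =>
    exact ih.trans (List.prefix_append (F (m+4)) (F (m+3))).isInfix

/-- Any attractor of F (m+7) has at least two elements. -/
lemma two_le_card_attractor (m : ℕ) {Γ : Finset ℕ} (h : IsAttractor (F (m+7)) Γ) :
    2 ≤ Γ.card := by
  obtain ⟨-, hatt⟩ := h
  obtain ⟨i, hocc, k, hk, hik, hki⟩ :=
    hatt [true] (by simp) (by simpa using true_infix (m+5))
  obtain ⟨i', hocc', k', hk', hik', hki'⟩ :=
    hatt [false, false] (by simp) (by simpa using aa_infix (m+3))
  have hkt : (F (m+7))[k - 1]? = some true := by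
    have := occ_getElem hocc 0 (by simp)
    have hki2 : k = i := by simp at hki; omega
    simpa [hki2] using this
  have hkf : (F (m+7))[k' - 1]? = some false := by
    rcases (by simp at hki'; omega : k' = i' ∨ k' = i' + 1) with h | h
    · have := occ_getElem hocc' 0 (by simp)
      simpa [h] using this
    · have := occ_getElem hocc' 1 (by simp)
      have h1 : 1 ≤ i' := hocc'.1
      have : (F (m+7))[i' - 1 + 1]? = some false := by simpa using this
      rw [show k' - 1 = i' - 1 + 1 by omega]
      exact this
  have hne : k ≠ k' := by
    intro he; rw [he, hkf] at hkt; simp at hkt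
  exact Finset.one_lt_card.mpr ⟨k, hk, k', hk', hne⟩
/-- For every n ≥ 7, if every pair in R_{n-3} ⊗ L_{n-2} is a smallest
string attractor of F_n, then every pair in L_{n-3} ⊗ L_{n-2} is a smallest string
attractor of F_n. -/
theorem fib_valid_att_from_flip_offset :
    ∀ n : ℕ, 7 ≤ n →
      pairSet (Rset (n - 3)) (Lset (n - 2)) ⊆ Att (F n) →
      pairSet (Lset (n - 3)) (Lset (n - 2)) ⊆ Att (F n) := by
  intro n hn H Γ hΓ
  obtain ⟨m, rfl⟩ : ∃ m, n = m + 7 := ⟨n - 7, by omega⟩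
  have e3 : m + 7 - 3 = m + 4 := rfl
  have e2 : m + 7 - 2 = m + 5 := rfl
  rw [e3, e2] at hΓ H
  obtain ⟨x, hx, y, hy, rfl⟩ := hΓ
  set T := F (m + 7) with hT
  set p := fib (m + 3) with hp
  set r := x + p with hr
  -- fib facts
  have f7 : fib (m+7) = fib (m+6) + fib (m+5) := rfl
  have f6 : fib (m+6) = fib (m+5) + fib (m+4) := rfl
  have f5 : fib (m+5) = fib (m+4) + fib (m+3) := rfl
  have f4 : fib (m+4) = fib (m+3) + fib (m+2) := rfl
  have f3 : fib (m+3) = fib (m+2) + fib (m+1) := rfl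
  have hp1 := fib_pos (m+1); have hp2 := fib_pos (m+2); have hp3 := fib_pos (m+3)
  -- bounds on x, y
  have hxlb : fib (m+5) ≤ x := Lset_lb (m+4) x hx
  have hxub : x ≤ fib (m+5) + fib (m+2) - 1 := Lset_ub (m+2) x hx
  have hylb : fib (m+6) ≤ y := Lset_lb (m+5) y hy
  have hyub : y ≤ fib (m+6) + fib (m+3) - 1 := Lset_ub (m+3) y hy
  have hrub : r ≤ fib (m+6) - 1 := by omega
  have hrltY : r < y := by omega
  -- the hypothesis pair
  have hrR : r ∈ Rset (m+4) := by
    rw [Rset, show m + 4 - 1 = m + 3 from rfl]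
    exact Finset.mem_image.mpr ⟨x, hx, rfl⟩
  have Hs : IsSmallestAttractor T {r, y} := H ⟨r, hrR, y, hy, rfl⟩
  obtain ⟨⟨hbounds, hatt⟩, hmin⟩ := Hs
  have hrbd := hbounds r (by simp)
  have hybd := hbounds y (by simp [Finset.mem_insert])
  constructor
  · constructor
    · intro k hk
      rcases Finset.mem_insert.mp hk with rfl | hk
      · exact ⟨by omega, by omega⟩
      · rw [Finset.mem_singleton] at hk; subst hk; exact hybd
    · intro w hw hinf
      obtain ⟨i, hocc, k, hk, hik, hki⟩ := hatt w hw hinf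
      rcases Finset.mem_insert.mp hk with rfl | hk
      · -- k = r
        by_cases hix : i ≤ x
        · exact ⟨i, hocc, x, by simp, hix, by omega⟩
        · push_neg at hix
          by_cases hyw : y < i + w.length
          · exact ⟨i, hocc, y, by simp [Finset.mem_insert], by omega, hyw⟩
          · push_neg at hyw
            obtain ⟨hi1, hi2, hi3⟩ := hocc
            refine ⟨i - p, ⟨by omega, by omega, ?_⟩, x, by simp, by omega, by omega⟩
            have hper := per m (i - p - 1) w.length (by omega) (by omega)
            rw [show i - p - 1 + fib (m+3) = i - 1 by omega] at hper
            rw [← hT] at hper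
            rw [hper, hi3]
      · -- k = y
        rw [Finset.mem_singleton] at hk
        exact ⟨i, hocc, k, by rw [hk]; simp, hik, hki⟩
  · intro Γ' hΓ'
    calc ({x, y} : Finset ℕ).card ≤ ({y} : Finset ℕ).card + 1 := Finset.card_insert_le x {y}
      _ ≤ 2 := by simp
      _ ≤ Γ'.card := two_le_card_attractor m hΓ'
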